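/- Let a > 1 be a real number, t̃ > 0, g(t) = log(((a-1)t + 1)/((a-1)t̃ + 1)) / log a, and p(t) = ⌊g(t)⌋. Then liminf_{t→∞} (1/t)·(a^{p(t)}·t̃ + (a^{p(t)} - 1)/(a - 1)) ≥ 1/a. -/

import Mathlib

open Filter Real

/-! Write `E = a ^ p(t)` and `c = (a - 1) t̃ + 1`. The bracket is the geometric sum
`(E c - 1) / (a - 1)`, and `a ^ g(t) = ((a - 1) t + 1) / c`. Since `g - 1 < p ≤ g`, the quantity
`E c` lies between `((a - 1) t + 1) / a` and `(a - 1) t + 1`, so the bracket lies between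
`(t - 1) / a` and `t`. Divided by `t`, the lower bound tends to `1 / a` and the upper one keeps
the liminf finite. -/

theorem Filter.le_liminf_of_tendsto_of_eventually_le {α : Type*} {f : Filter α} [f.NeBot]
    {l u : α → ℝ} {L C : ℝ} (hl : Tendsto l f (nhds L)) (hlu : ∀ᶠ x in f, l x ≤ u x)
    (huC : ∀ᶠ x in f, u x ≤ C) : L ≤ liminf u f :=
  calc L = liminf l f := hl.liminf_eq.symm
    _ ≤ liminf u f :=
      liminf_le_liminf hlu hl.isBoundedUnder_ge (isCoboundedUnder_ge_of_eventually_le f huC)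

namespace Real

variable {a y : ℝ}

theorem rpow_floor_le_rpow (ha : 1 ≤ a) (y : ℝ) : a ^ (⌊y⌋ : ℝ) ≤ a ^ y :=
  rpow_le_rpow_of_exponent_le ha (Int.floor_le y)

theorem rpow_div_self_le_rpow_floor (ha : 1 ≤ a) (y : ℝ) : a ^ y / a ≤ a ^ (⌊y⌋ : ℝ) := by
  rw [← rpow_sub_one (by positivity)]
  exact rpow_le_rpow_of_exponent_le ha (by linarith [Int.sub_one_lt_floor y])

theorem div_self_le_rpow_floor_logb (ha : 1 < a) (hy : 0 < y) :
    y / a ≤ a ^ (⌊logb a y⌋ : ℝ) := by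
  simpa only [rpow_logb (by positivity) ha.ne' hy] using
    rpow_div_self_le_rpow_floor ha.le (logb a y)

theorem rpow_floor_logb_le_self (ha : 1 < a) (hy : 0 < y) :
    a ^ (⌊logb a y⌋ : ℝ) ≤ y := by
  simpa only [rpow_logb (by positivity) ha.ne' hy] using rpow_floor_le_rpow ha.le (logb a y)

end Real

theorem mul_add_geom_div_eq {a s E : ℝ} (ha : a ≠ 1) :
    E * s + (E - 1) / (a - 1) = (E * ((a - 1) * s + 1) - 1) / (a - 1) := by
  have : a - 1 ≠ 0 := sub_ne_zero.mpr ha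
  field_simp
  ring

theorem sub_one_div_le_mul_add_geom_div {a s t E : ℝ} (ha : 1 < a) (hs : 0 < s)
    (hE : ((a - 1) * t + 1) / ((a - 1) * s + 1) / a ≤ E) :
    (t - 1) / a ≤ E * s + (E - 1) / (a - 1) := by
  have hc : 0 < (a - 1) * s + 1 := by nlinarith
  have ha0 : 0 < a := by linarith
  rw [div_div, div_le_iff₀ (by positivity)] at hE
  rw [mul_add_geom_div_eq ha.ne', div_le_div_iff₀ ha0 (by linarith)]
  nlinarith

theorem mul_add_geom_div_le {a s t E : ℝ} (ha : 1 < a) (hs : 0 < s)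
    (hE : E ≤ ((a - 1) * t + 1) / ((a - 1) * s + 1)) :
    E * s + (E - 1) / (a - 1) ≤ t := by
  have hc : 0 < (a - 1) * s + 1 := by nlinarith
  rw [le_div_iff₀ hc] at hE
  rw [mul_add_geom_div_eq ha.ne', div_le_iff₀ (by linarith)]
  linarith

/-- With g as above and p(t) = ⌊g(t)⌋,
liminf_{t→∞} (1/t)·(a^{p(t)}·t̃ + (a^{p(t)} - 1)/(a-1)) ≥ 1/a. -/
theorem stmt_4 (a ttil : ℝ) (ha : 1 < a) (ht : 0 < ttil)
    (g : ℝ → ℝ)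
    (hg : ∀ t > 0, g t = Real.log (((a - 1) * t + 1) / ((a - 1) * ttil + 1)) / Real.log a)
    (p : ℝ → ℤ) (hp : ∀ t, p t = ⌊g t⌋) :
    (1 / a) ≤ Filter.liminf (fun t : ℝ =>
      (1 / t) * (Real.exp ((p t : ℝ) * Real.log a) * ttil
        + (Real.exp ((p t : ℝ) * Real.log a) - 1) / (a - 1))) atTop := by
  have hpow : ∀ t > 0, Real.exp ((p t : ℝ) * Real.log a)
      = a ^ (⌊logb a (((a - 1) * t + 1) / ((a - 1) * ttil + 1))⌋ : ℝ) := fun t ht0 => by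
    rw [rpow_def_of_pos (by linarith), mul_comm, hp, hg t ht0, logb]
  have hratio : ∀ t > 0, 0 < ((a - 1) * t + 1) / ((a - 1) * ttil + 1) := fun t ht0 => by
    have : 0 < a - 1 := by linarith
    positivity
  have hlower : Tendsto (fun t : ℝ => (1 / t) * ((t - 1) / a)) atTop (nhds (1 / a)) := by
    have h : Tendsto (fun t : ℝ => (1 - t⁻¹) / a) atTop (nhds ((1 - 0) / a)) :=
      (tendsto_const_nhds.sub tendsto_inv_atTop_zero).div_const a
    rw [sub_zero] at h
    refine h.congr' ?_
    filter_upwards [eventually_gt_atTop 0] with t ht0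
    field_simp
  refine le_liminf_of_tendsto_of_eventually_le (C := 1) hlower ?_ ?_ <;>
    filter_upwards [eventually_gt_atTop 0] with t ht0 <;> rw [hpow t ht0]
  · exact mul_le_mul_of_nonneg_left (sub_one_div_le_mul_add_geom_div ha ht
      (div_self_le_rpow_floor_logb ha (hratio t ht0))) (by positivity)
  · calc (1 / t) * _ ≤ (1 / t) * t := mul_le_mul_of_nonneg_left (mul_add_geom_div_le ha ht
          (rpow_floor_logb_le_self ha (hratio t ht0))) (by positivity)
      _ = 1 := one_div_mul_cancel ht0.ne'
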